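/- arXiv:2505.22468 — 2 statements merged into one kernel-verified Lean document; each statement's English description precedes it below -/
import Mathlib

section
/- Under Assumption 1 and the small cone assumption, the operators F_h^+ = F I_h^+ R_h and F̂_h^+ = R_h F I_h^+ have the same additive eigenvalue: r(F̂_h^+) = r(F_h^+), where r(G) denotes the unique additive eigenvalue of G associated to a distance-like eigenvector, equal to lim_{k→∞} [G^k d(·,x₀)](x₀)/k. -/
open Set Filter

/-- The Funk hemi-metric on a cone `C`. -/
noncomputable def funk {n : ℕ} (C : Set (Fin n → ℝ)) (x y : Fin n → ℝ) : ℝ :=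
  Real.log (sInf {l : ℝ | 0 < l ∧ l • y - x ∈ C})

/-- The dual cone of `C`. -/
def dualCone {n : ℕ} (C : Set (Fin n → ℝ)) : Set (Fin n → ℝ) :=
  {y | ∀ x ∈ C, 0 ≤ dotProduct x y}

/-- The cross-section `X = K ∩ Δ` of the small cone `K`,
where `Δ = {x | ⟨x, e*⟩ = 1}`. -/
def crossSec {n : ℕ} (K : Set (Fin n → ℝ)) (estar : Fin n → ℝ) : Set (Fin n → ℝ) :=
  {x ∈ K | dotProduct x estar = 1}

/-- The operator
`F v (x) = inf_a sup_b [log⟨T_{ab}(x), e*⟩ + v (T_{ab}(x)/⟨T_{ab}(x), e*⟩)]`. -/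
noncomputable def Fop {n : ℕ} {E : Type*} (A B : Set E)
    (T : E → E → (Fin n → ℝ) → (Fin n → ℝ)) (estar : Fin n → ℝ)
    (v : (Fin n → ℝ) → ℝ) (x : Fin n → ℝ) : ℝ :=
  ⨅ a : A, ⨆ b : B, (Real.log (dotProduct (T a b x) estar) +
    v ((dotProduct (T a b x) estar)⁻¹ • T a b x))

/-- The interpolation operator `I_h^+ v (x) = min_{y ∈ X_h} [v(y) + Funk(x,y)]`. -/
noncomputable def Ih {n : ℕ} (C : Set (Fin n → ℝ)) (Xh : Finset (Fin n → ℝ))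
    (hne : Xh.Nonempty) (v : (Fin n → ℝ) → ℝ) (x : Fin n → ℝ) : ℝ :=
  Xh.inf' hne (fun y => v y + funk C x y)


/-!
On the grid, both `v` and `w` are additive eigenvectors of `R_h F I_h^+`, an operator that is
monotone and commutes with the addition of constants. At a grid point `x` where `v - w` attains
its maximum `c`, this gives `I_h^+ v ≤ I_h^+ w + c`, hence `l + v x ≤ m + w x + c`, i.e. `l ≤ m`;
exchanging the roles of `v` and `w` gives equality. The compactness assumptions only serve to
make the families over which `F` takes its infimum and supremum bounded, so that these are the
true infimum and supremum rather than junk values.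
-/

section Cone

variable {n : ℕ} {C : Set (Fin n → ℝ)}

theorem zero_notMem_interior_of_pointed (hCcone : ∀ x ∈ C, ∀ r : ℝ, 0 ≤ r → r • x ∈ C)
    (hCpointed : ∀ x ∈ C, -x ∈ C → x = 0) {x : Fin n → ℝ} (hxC : x ∈ C) (hx : x ≠ 0) :
    (0 : Fin n → ℝ) ∉ interior C := by
  intro h0
  obtain ⟨ε, hε, hball⟩ := Metric.mem_nhds_iff.mp (mem_interior_iff_mem_nhds.mp h0)
  have hxn : 0 < ‖x‖ := norm_pos_iff.mpr hx
  set s : ℝ := ε / (2 * ‖x‖)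
  have hs : 0 < s := by positivity
  have hsx : s • -x ∈ C := hball <| by
    rw [Metric.mem_ball, dist_zero_right, norm_smul, norm_neg, Real.norm_of_nonneg hs.le]
    have : s * ‖x‖ = ε / 2 := by simp only [s]; field_simp
    linarith
  have hnegx : -x ∈ C := by
    simpa [smul_smul, inv_mul_cancel₀ hs.ne'] using hCcone _ hsx s⁻¹ (inv_nonneg.mpr hs.le)
  exact hx (hCpointed x hxC hnegx)

theorem dotProduct_pos_of_mem_interior_dualCone {estar : Fin n → ℝ}
    (hestar : estar ∈ interior (dualCone C)) {z : Fin n → ℝ} (hzC : z ∈ C) (hz : z ≠ 0) :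
    0 < z ⬝ᵥ estar := by
  obtain ⟨ε, hε, hball⟩ := Metric.mem_nhds_iff.mp (mem_interior_iff_mem_nhds.mp hestar)
  have hzn : 0 < ‖z‖ := norm_pos_iff.mpr hz
  set t : ℝ := ε / (2 * ‖z‖)
  have ht : 0 < t := by positivity
  -- `estar - t • z` still lies in the dual cone, so `t ‖z‖² ≤ ⟨z, estar⟩`.
  have hdual : estar - t • z ∈ dualCone C := hball <| by
    rw [Metric.mem_ball, dist_eq_norm, sub_sub_cancel_left, norm_neg, norm_smul,
      Real.norm_of_nonneg ht.le]
    have : t * ‖z‖ = ε / 2 := by simp only [t]; field_simp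
    linarith
  have hzz : 0 < z ⬝ᵥ z := by simpa using Matrix.dotProduct_star_self_pos_iff.mpr hz
  have := hdual z hzC
  rw [dotProduct_sub, dotProduct_smul, smul_eq_mul] at this
  nlinarith

theorem funk_nonneg {estar : Fin n → ℝ} (hestar : estar ∈ dualCone C) {z y : Fin n → ℝ}
    (hz : z ⬝ᵥ estar = 1) (hy : y ⬝ᵥ estar = 1) : 0 ≤ funk C z y := by
  rcases eq_empty_or_nonempty {l : ℝ | 0 < l ∧ l • y - z ∈ C} with he | hne
  · simp [funk, he]
  · refine Real.log_nonneg (le_csInf hne ?_)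
    rintro l ⟨-, hlC⟩
    have := hestar _ hlC
    rw [sub_dotProduct, smul_dotProduct, smul_eq_mul, hy, hz, mul_one] at this
    linarith

theorem funk_le_log_of_ball_subset (hCcone : ∀ x ∈ C, ∀ r : ℝ, 0 ≤ r → r • x ∈ C)
    {y : Fin n → ℝ} {ε : ℝ} (hε : 0 < ε) (hball : Metric.ball y ε ⊆ C)
    {z : Fin n → ℝ} {M : ℝ} (hM : 0 ≤ M) (hz : ‖z‖ ≤ M) :
    funk C z y ≤ Real.log (M / ε + 1) := by
  set l : ℝ := M / ε + 1
  have hl1 : 1 ≤ l := le_add_of_nonneg_left (by positivity)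
  have hl : 0 < l := one_pos.trans_le hl1
  have hmem : l ∈ {l : ℝ | 0 < l ∧ l • y - z ∈ C} := by
    refine ⟨hl, ?_⟩
    have hyz : y - l⁻¹ • z ∈ C := hball <| by
      rw [Metric.mem_ball, dist_eq_norm, sub_sub_cancel_left, norm_neg, norm_smul,
        Real.norm_of_nonneg (inv_pos.mpr hl).le, inv_mul_eq_div, div_lt_iff₀ hl]
      have : ε * l = M + ε := by simp only [l]; field_simp
      linarith
    simpa [smul_sub, smul_inv_smul₀ hl.ne'] using hCcone _ hyz l hl.le
  have hinf_le : sInf {l : ℝ | 0 < l ∧ l • y - z ∈ C} ≤ l := csInf_le ⟨0, fun _ h => h.1.le⟩ hmem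
  rcases (le_csInf ⟨l, hmem⟩ fun _ h => h.1.le).eq_or_lt with h0 | hpos
  · rw [funk, ← h0, Real.log_zero]
    exact Real.log_nonneg hl1
  · exact Real.log_le_log hpos hinf_le

end Cone

theorem ciInf_ciSup_le_ciInf_ciSup_add {ι κ : Sort*} [Nonempty ι] [Nonempty κ]
    {f g : ι → κ → ℝ} {c : ℝ} (hfg : ∀ i j, f i j ≤ g i j + c)
    (hg : ∀ i, BddAbove (range (g i))) (hf : BddBelow (range fun i => ⨆ j, f i j)) :
    ⨅ i, ⨆ j, f i j ≤ (⨅ i, ⨆ j, g i j) + c := by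
  rw [← sub_le_iff_le_add]
  refine le_ciInf fun i => sub_le_iff_le_add.mpr ?_
  exact (ciInf_le hf i).trans <|
    ciSup_le fun j => (hfg i j).trans (add_le_add_left (le_ciSup (hg i) j) c)

section Interpolation

variable {n : ℕ} {C : Set (Fin n → ℝ)} {Xh : Finset (Fin n → ℝ)} (hne : Xh.Nonempty)

theorem Ih_le_Ih_add {v w : (Fin n → ℝ) → ℝ} {c : ℝ} (hvw : ∀ y ∈ Xh, v y ≤ w y + c)
    (x : Fin n → ℝ) : Ih C Xh hne v x ≤ Ih C Xh hne w x + c := by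
  obtain ⟨y, hy, hyw⟩ := Finset.exists_mem_eq_inf' hne (fun y => w y + funk C x y)
  rw [Ih, Ih, hyw]
  linarith [Finset.inf'_le (fun y => v y + funk C x y) hy, hvw y hy]

theorem inf'_le_Ih {estar : Fin n → ℝ} (hestar : estar ∈ dualCone C)
    (hXh : ∀ y ∈ Xh, y ⬝ᵥ estar = 1) (u : (Fin n → ℝ) → ℝ) {z : Fin n → ℝ}
    (hz : z ⬝ᵥ estar = 1) : Xh.inf' hne u ≤ Ih C Xh hne u z :=
  Finset.le_inf' _ _ fun y hy =>
    le_add_of_le_of_nonneg (Finset.inf'_le u hy) (funk_nonneg hestar hz (hXh y hy))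

end Interpolation

section Bounds

variable {n : ℕ} {C : Set (Fin n → ℝ)} {estar : Fin n → ℝ}

theorem IsCompact.exists_dotProduct_bounds (hestar : estar ∈ interior (dualCone C))
    {Z : Set (Fin n → ℝ)} (hZ : IsCompact Z) (hZC : Z ⊆ C) (hZ0 : (0 : Fin n → ℝ) ∉ Z) :
    ∃ δ > 0, ∃ D R : ℝ, ∀ z ∈ Z, δ ≤ z ⬝ᵥ estar ∧ z ⬝ᵥ estar ≤ D ∧ ‖z‖ ≤ R := by
  have hdot : Continuous fun z : Fin n → ℝ => z ⬝ᵥ estar := continuous_id.dotProduct continuous_const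
  obtain ⟨δ, hδ, hδle⟩ := hZ.exists_forall_le' hdot.continuousOn fun z hz =>
    dotProduct_pos_of_mem_interior_dualCone hestar (hZC hz) (ne_of_mem_of_not_mem hz hZ0)
  obtain ⟨D, hD⟩ := hZ.bddAbove_image hdot.continuousOn
  obtain ⟨R, hR⟩ := hZ.isBounded.exists_norm_le
  exact ⟨δ, hδ, D, R, fun z hz => ⟨hδle z hz, hD ⟨z, hz, rfl⟩, hR z hz⟩⟩

variable {Xh : Finset (Fin n → ℝ)} (hne : Xh.Nonempty)

theorem exists_bounds_log_add_Ih (hCcone : ∀ x ∈ C, ∀ r : ℝ, 0 ≤ r → r • x ∈ C)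
    (hestar : estar ∈ interior (dualCone C)) (hXh : ∀ y ∈ Xh, y ∈ interior C ∧ y ⬝ᵥ estar = 1)
    (u : (Fin n → ℝ) → ℝ) {Z : Set (Fin n → ℝ)} (hZ : IsCompact Z) (hZC : Z ⊆ C)
    (hZ0 : (0 : Fin n → ℝ) ∉ Z) :
    ∃ L U : ℝ, ∀ z ∈ Z,
      L ≤ Real.log (z ⬝ᵥ estar) + Ih C Xh hne u ((z ⬝ᵥ estar)⁻¹ • z) ∧
      Real.log (z ⬝ᵥ estar) + Ih C Xh hne u ((z ⬝ᵥ estar)⁻¹ • z) ≤ U := by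
  obtain ⟨δ, hδ, D, R, hZbd⟩ := hZ.exists_dotProduct_bounds hestar hZC hZ0
  obtain ⟨y, hy⟩ := hne
  obtain ⟨ε, hε, hball⟩ := Metric.mem_nhds_iff.mp (mem_interior_iff_mem_nhds.mp (hXh y hy).1)
  refine ⟨Real.log δ + Xh.inf' ⟨y, hy⟩ u, Real.log D + (u y + Real.log (R / δ / ε + 1)),
    fun z hz => ?_⟩
  obtain ⟨hδz, hzD, hzR⟩ := hZbd z hz
  have hd : 0 < z ⬝ᵥ estar := hδ.trans_le hδz
  have hdot : (z ⬝ᵥ estar)⁻¹ • z ⬝ᵥ estar = 1 := by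
    rw [smul_dotProduct, smul_eq_mul, inv_mul_cancel₀ hd.ne']
  have hnorm : ‖(z ⬝ᵥ estar)⁻¹ • z‖ ≤ R / δ := by
    rw [norm_smul, Real.norm_of_nonneg (inv_pos.mpr hd).le, inv_mul_eq_div]
    exact div_le_div₀ ((norm_nonneg z).trans hzR) hzR hδ hδz
  have hR : 0 ≤ R / δ := div_nonneg ((norm_nonneg z).trans hzR) hδ.le
  constructor
  · exact add_le_add (Real.log_le_log hδ hδz)
      (inf'_le_Ih _ (interior_subset hestar) (fun y hy => (hXh y hy).2) u hdot)
  · refine add_le_add (Real.log_le_log hd hzD) ((Finset.inf'_le _ hy).trans ?_)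
    exact add_le_add le_rfl (funk_le_log_of_ball_subset hCcone hε hball hR hnorm)

end Bounds

section MinMax

variable {n : ℕ} {C : Set (Fin n → ℝ)} {estar : Fin n → ℝ} {E : Type*} {A B : Set E}
  {T : E → E → (Fin n → ℝ) → (Fin n → ℝ)} {Xh : Finset (Fin n → ℝ)} (hne : Xh.Nonempty)

theorem Fop_Ih_le_Fop_Ih_add (hCcone : ∀ x ∈ C, ∀ r : ℝ, 0 ≤ r → r • x ∈ C)
    (hCpointed : ∀ x ∈ C, -x ∈ C → x = 0) (hestar : estar ∈ interior (dualCone C))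
    (hAne : A.Nonempty) (hBne : B.Nonempty)
    (hTmaps : ∀ a ∈ A, ∀ b ∈ B, ∀ x ∈ interior C, T a b x ∈ interior C)
    (hcomp : ∀ Kc : Set (Fin n → ℝ), Kc ⊆ interior C → IsCompact Kc →
      IsCompact {z | ∃ a ∈ A, ∃ b ∈ B, ∃ x ∈ Kc, z = T a b x})
    (hXh : ∀ y ∈ Xh, y ∈ interior C ∧ y ⬝ᵥ estar = 1)
    {v w : (Fin n → ℝ) → ℝ} {c : ℝ} (hvw : ∀ y ∈ Xh, v y ≤ w y + c)
    {x : Fin n → ℝ} (hx : x ∈ interior C) :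
    Fop A B T estar (Ih C Xh hne v) x ≤ Fop A B T estar (Ih C Xh hne w) x + c := by
  have : Nonempty A := hAne.to_subtype
  have hB : Nonempty B := hBne.to_subtype
  set Z := {z | ∃ a ∈ A, ∃ b ∈ B, ∃ x' ∈ ({x} : Set (Fin n → ℝ)), z = T a b x'}
  have hTZ : ∀ (a : A) (b : B), T a b x ∈ Z := fun a b => ⟨a, a.2, b, b.2, x, rfl, rfl⟩
  have hZC : Z ⊆ interior C := by
    rintro _ ⟨a, ha, b, hb, _, rfl, rfl⟩
    exact hTmaps a ha b hb _ hx
  have hZ0 : (0 : Fin n → ℝ) ∉ Z := by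
    obtain ⟨y, hy⟩ := hne
    have hy0 : y ≠ 0 := by rintro rfl; simpa using (hXh 0 hy).2
    exact fun h0 => zero_notMem_interior_of_pointed hCcone hCpointed
      (interior_subset (hXh y hy).1) hy0 (hZC h0)
  have hZ : IsCompact Z := hcomp {x} (singleton_subset_iff.mpr hx) isCompact_singleton
  obtain ⟨Lv, Uv, hv⟩ :=
    exists_bounds_log_add_Ih hne hCcone hestar hXh v hZ (hZC.trans interior_subset) hZ0
  obtain ⟨_, Uw, hw⟩ :=
    exists_bounds_log_add_Ih hne hCcone hestar hXh w hZ (hZC.trans interior_subset) hZ0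
  refine ciInf_ciSup_le_ciInf_ciSup_add (fun a b => ?_)
    (fun a => ⟨Uw, forall_mem_range.mpr fun b => (hw _ (hTZ a b)).2⟩)
    ⟨Lv, forall_mem_range.mpr fun a => ?_⟩
  · rw [add_assoc]
    exact add_le_add le_rfl (Ih_le_Ih_add hne hvw _)
  · obtain ⟨b⟩ := hB
    exact (hv _ (hTZ a b)).1.trans
      (le_ciSup ⟨Uv, forall_mem_range.mpr fun b => (hv _ (hTZ a b)).2⟩ b)

theorem le_of_Fop_Ih_eigen (hCcone : ∀ x ∈ C, ∀ r : ℝ, 0 ≤ r → r • x ∈ C)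
    (hCpointed : ∀ x ∈ C, -x ∈ C → x = 0) (hestar : estar ∈ interior (dualCone C))
    (hAne : A.Nonempty) (hBne : B.Nonempty)
    (hTmaps : ∀ a ∈ A, ∀ b ∈ B, ∀ x ∈ interior C, T a b x ∈ interior C)
    (hcomp : ∀ Kc : Set (Fin n → ℝ), Kc ⊆ interior C → IsCompact Kc →
      IsCompact {z | ∃ a ∈ A, ∃ b ∈ B, ∃ x ∈ Kc, z = T a b x})
    (hXh : ∀ y ∈ Xh, y ∈ interior C ∧ y ⬝ᵥ estar = 1)
    {v w : (Fin n → ℝ) → ℝ} {l m : ℝ}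
    (hv : ∀ x ∈ Xh, Fop A B T estar (Ih C Xh hne v) x = l + v x)
    (hw : ∀ x ∈ Xh, Fop A B T estar (Ih C Xh hne w) x = m + w x) :
    l ≤ m := by
  obtain ⟨x, hx, hmax⟩ := Finset.exists_max_image Xh (fun y => v y - w y) hne
  have hvw : ∀ y ∈ Xh, v y ≤ w y + (v x - w x) := fun y hy => by linarith [hmax y hy]
  have := Fop_Ih_le_Fop_Ih_add hne hCcone hCpointed hestar hAne hBne hTmaps hcomp hXh hvw
    (hXh x hx).1
  rw [hv x hx, hw x hx] at this
  linarith

end MinMax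

theorem stmt_15_general
    {n : ℕ} (C : Set (Fin n → ℝ))
    (hCcone : ∀ x ∈ C, ∀ r : ℝ, 0 ≤ r → r • x ∈ C)
    (hCpointed : ∀ x ∈ C, -x ∈ C → x = 0)
    (estar : Fin n → ℝ) (hestar : estar ∈ interior (dualCone C))
    {E : Type*}
    (A B : Set E) (hAne : A.Nonempty)
    (hBne : B.Nonempty)
    (T : E → E → (Fin n → ℝ) → (Fin n → ℝ))
    (hTmaps : ∀ a ∈ A, ∀ b ∈ B, ∀ x ∈ interior C, T a b x ∈ interior C)
    (hcomp : ∀ Kc : Set (Fin n → ℝ), Kc ⊆ interior C → IsCompact Kc →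
      IsCompact {z | ∃ a ∈ A, ∃ b ∈ B, ∃ x ∈ Kc, z = T a b x})
    (K : Set (Fin n → ℝ))
    (hXsub : crossSec K estar ⊆ interior C)
    (Xh : Finset (Fin n → ℝ)) (hXhne : Xh.Nonempty)
    (hXhsub : ↑Xh ⊆ crossSec K estar)
    (v : (Fin n → ℝ) → ℝ) (l : ℝ)
    (heigv : ∀ x ∈ crossSec K estar, Fop A B T estar (Ih C Xh hXhne v) x = l + v x)
    (w : (Fin n → ℝ) → ℝ) (m : ℝ)
    (heigw : ∀ x ∈ Xh, Fop A B T estar (Ih C Xh hXhne w) x = m + w x) :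
    l = m := by
  have hXh : ∀ y ∈ Xh, y ∈ interior C ∧ y ⬝ᵥ estar = 1 := fun y hy =>
    ⟨hXsub (hXhsub hy), (hXhsub hy).2⟩
  have heigv' : ∀ x ∈ Xh, Fop A B T estar (Ih C Xh hXhne v) x = l + v x :=
    fun x hx => heigv x (hXhsub hx)
  exact le_antisymm
    (le_of_Fop_Ih_eigen hXhne hCcone hCpointed hestar hAne hBne hTmaps hcomp hXh heigv' heigw)
    (le_of_Fop_Ih_eigen hXhne hCcone hCpointed hestar hAne hBne hTmaps hcomp hXh heigw heigv')

/-- the operators `F_h^+ = F I_h^+ R_h` and `F̂_h^+ = R_h F I_h^+`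
have the same additive eigenvalue associated to distance-like eigenvectors. -/
theorem stmt_15
    {n : ℕ} (C : Set (Fin n → ℝ))
    (hCclosed : IsClosed C) (hCconv : Convex ℝ C)
    (hCcone : ∀ x ∈ C, ∀ r : ℝ, 0 ≤ r → r • x ∈ C)
    (hCpointed : ∀ x ∈ C, -x ∈ C → x = 0)
    (estar : Fin n → ℝ) (hestar : estar ∈ interior (dualCone C))
    {E : Type*} [MetricSpace E]
    (A B : Set E) (hAc : IsCompact A) (hAne : A.Nonempty)
    (hBc : IsCompact B) (hBne : B.Nonempty)
    (T : E → E → (Fin n → ℝ) → (Fin n → ℝ))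
    (hTmaps : ∀ a ∈ A, ∀ b ∈ B, ∀ x ∈ interior C, T a b x ∈ interior C)
    (hTnexp : ∀ a ∈ A, ∀ b ∈ B, ∀ x ∈ interior C, ∀ y ∈ interior C,
      funk C (T a b x) (T a b y) ≤ funk C x y)
    (hconta : ∀ x ∈ interior C, ∀ b ∈ B, ContinuousOn (fun a => T a b x) A)
    (hcontb : ∀ x ∈ interior C, ∀ a ∈ A, ContinuousOn (fun b => T a b x) B)
    (hcomp : ∀ Kc : Set (Fin n → ℝ), Kc ⊆ interior C → IsCompact Kc →
      IsCompact {z | ∃ a ∈ A, ∃ b ∈ B, ∃ x ∈ Kc, z = T a b x})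
    (K : Set (Fin n → ℝ)) (hKclosed : IsClosed K)
    (hKcone : ∀ x ∈ K, ∀ r : ℝ, 0 ≤ r → r • x ∈ K) (hKC : K ⊆ C)
    (hTK : ∀ a ∈ A, ∀ b ∈ B, ∀ x ∈ K, T a b x ∈ K)
    (hXsub : crossSec K estar ⊆ interior C)
    (hXne : (crossSec K estar).Nonempty)
    (h : ℝ) (hh : 0 < h)
    (Xh : Finset (Fin n → ℝ)) (hXhne : Xh.Nonempty)
    (hXhsub : ↑Xh ⊆ crossSec K estar)
    (hcover : ∀ x ∈ crossSec K estar, ∃ y ∈ Xh, funk C x y + funk C y x < h)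
    (v : (Fin n → ℝ) → ℝ) (l : ℝ)
    (hvLip : ∀ x ∈ crossSec K estar, ∀ y ∈ crossSec K estar, v x - v y ≤ funk C x y)
    (heigv : ∀ x ∈ crossSec K estar, Fop A B T estar (Ih C Xh hXhne v) x = l + v x)
    (hvdl : ∃ x₀ ∈ crossSec K estar, ∃ α : ℝ, ∀ x ∈ crossSec K estar,
      α + funk C x x₀ ≤ v x)
    (w : (Fin n → ℝ) → ℝ) (m : ℝ)
    (hwLip : ∀ x ∈ Xh, ∀ y ∈ Xh, w x - w y ≤ funk C x y)
    (heigw : ∀ x ∈ Xh, Fop A B T estar (Ih C Xh hXhne w) x = m + w x)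
    (hwdl : ∃ x₀ ∈ Xh, ∃ α : ℝ, ∀ x ∈ Xh, α + funk C x x₀ ≤ w x) :
    l = m :=
  stmt_15_general C hCcone hCpointed estar hestar A B hAne hBne T hTmaps hcomp K hXsub Xh hXhne
    hXhsub v l heigv w m heigw
end

section
/- Under Assumption 1 and the small cone assumption, let h > 0 and let X_h be a grid such that every point of X is within Hilbert distance h of some point of X_h. If v ∈ Lip₁(X_h) and λ ∈ ℝ satisfy F̂_h^+ v = λ + v, then the competitive spectral radius ρ of the escape rate game satisfies λ − h ≤ ρ ≤ λ. -/
/-!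
Let `W = I_h^+ v`, read as a function on the whole interior of `C`. As a finite minimum of
functions `v y + Funk(·, y)` it is Funk-nonexpansive and satisfies `W (t • x) = log t + W x`,
so the eigen-equation says exactly that `S W = λ + v` on the grid. Since `S W` is
Funk-nonexpansive too, comparing `x` with grid points gives `S W ≤ λ + W` on `int C`, and,
because every point of `X` is Hilbert-closer than `h` to the grid, `λ - h + W ≤ S W` on `X`,
hence on `K` by homogeneity. `Funk(·, x̄)` stays within bounded distance of `W`, so
monotonicity and additive homogeneity of `S` give
`k (λ - h) - c ≤ S^k Funk(·, x̄) (x̄) ≤ k λ + c`; divide by `k`.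
-/

open Set Filter

/-- The Shapley operator of the escape rate game:
`S v (x) = inf_{a ∈ 𝒜} sup_{b ∈ ℬ} v (T_{ab}(x))`. -/
noncomputable def shapley {X : Type*} {E : Type*} (A B : Set E)
    (T : E → E → X → X) : (X → ℝ) → X → ℝ :=
  fun v x => ⨅ a : A, ⨆ b : B, v (T a b x)

section Bounds

variable {X : Type*}

/-- `Lip₁` for a hemi-metric `d`. -/
def LipOneOn (d : X → X → ℝ) (U : Set X) (g : X → ℝ) : Prop :=
  ∀ x ∈ U, ∀ y ∈ U, g x ≤ g y + d x y

/-- Needed to keep the `⨅`/`⨆` in `shapley` away from their junk value `0` on unbounded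
families. -/
def BddOnCompacts [TopologicalSpace X] (U : Set X) (g : X → ℝ) : Prop :=
  ∀ k ⊆ U, IsCompact k → BddBelow (g '' k) ∧ BddAbove (g '' k)

variable {U : Set X}

lemma LipOneOn.finset_inf' {d : X → X → ℝ} {ι : Type*} {s : Finset ι} (hs : s.Nonempty)
    {f : ι → X → ℝ} (hf : ∀ i ∈ s, LipOneOn d U (f i)) :
    LipOneOn d U (fun x => s.inf' hs fun i => f i x) := by
  intro x hx y hy
  obtain ⟨i, hi, hiy⟩ := s.exists_mem_eq_inf' hs (f · y)
  simp only [hiy]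
  exact (Finset.inf'_le (f · x) hi).trans (hf i hi x hx y hy)

variable [TopologicalSpace X]

lemma BddOnCompacts.of_le_of_le {g lo hi : X → ℝ} (hlo : ContinuousOn lo U)
    (hhi : ContinuousOn hi U) (h : ∀ x ∈ U, lo x ≤ g x ∧ g x ≤ hi x) : BddOnCompacts U g := by
  intro k hk hkc
  obtain ⟨m, hm⟩ := hkc.bddBelow_image (hlo.mono hk)
  obtain ⟨M, hM⟩ := hkc.bddAbove_image (hhi.mono hk)
  exact ⟨⟨m, forall_mem_image.2 fun x hx => (hm (mem_image_of_mem _ hx)).trans (h x (hk hx)).1⟩,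
    ⟨M, forall_mem_image.2 fun x hx => (h x (hk hx)).2.trans (hM (mem_image_of_mem _ hx))⟩⟩

lemma BddOnCompacts.const_add {g : X → ℝ} (hg : BddOnCompacts U g) (c : ℝ) :
    BddOnCompacts U (fun x => c + g x) := by
  intro k hk hkc
  rw [← image_image (c + ·) g]
  exact ⟨(monotone_id.const_add c).map_bddBelow (hg k hk hkc).1,
    (monotone_id.const_add c).map_bddAbove (hg k hk hkc).2⟩

lemma BddOnCompacts.finset_inf' {ι : Type*} {s : Finset ι} (hs : s.Nonempty) {f : ι → X → ℝ}
    (hf : ∀ i ∈ s, BddOnCompacts U (f i)) :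
    BddOnCompacts U (fun x => s.inf' hs fun i => f i x) := by
  intro k hk hkc
  obtain ⟨i₀, hi₀⟩ := hs
  obtain ⟨M, hM⟩ := (hf i₀ hi₀ k hk hkc).2
  refine ⟨?_, ⟨M, forall_mem_image.2 fun x hx =>
    (Finset.inf'_le (f · x) hi₀).trans (hM (mem_image_of_mem _ hx))⟩⟩
  refine ((s.finite_toSet.bddBelow_biUnion (S := fun i => f i '' k)).2
    fun i hi => (hf i hi k hk hkc).1).mono ?_
  rintro _ ⟨x, hx, rfl⟩
  obtain ⟨i, hi, hix⟩ := s.exists_mem_eq_inf' ⟨i₀, hi₀⟩ (f · x)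
  exact mem_biUnion hi ⟨x, hx, hix.symm⟩

end Bounds

lemma le_of_tendsto_div_of_forall_le {a : ℕ → ℝ} {ρ μ c : ℝ}
    (ha : Tendsto (fun k : ℕ => a k / k) atTop (nhds ρ)) (h : ∀ k : ℕ, k * μ + c ≤ a k) :
    μ ≤ ρ := by
  have hlim : Tendsto (fun k : ℕ => μ + c / k) atTop (nhds μ) := by
    simpa using tendsto_const_nhds.add (tendsto_const_div_atTop_nhds_zero_nat c)
  refine le_of_tendsto_of_tendsto hlim ha ?_
  filter_upwards [eventually_gt_atTop 0] with k hk
  rw [le_div_iff₀ (by exact_mod_cast hk), add_mul, div_mul_cancel₀ _ (by positivity)]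
  linarith [h k]

lemma le_of_tendsto_div_of_forall_ge {a : ℕ → ℝ} {ρ μ c : ℝ}
    (ha : Tendsto (fun k : ℕ => a k / k) atTop (nhds ρ)) (h : ∀ k : ℕ, a k ≤ k * μ + c) :
    ρ ≤ μ := by
  have := le_of_tendsto_div_of_forall_le (a := fun k => -a k) (μ := -μ) (c := -c)
    (by simpa only [neg_div] using ha.neg) fun k => by linarith [h k]
  linarith

lemma ciInf_ciSup_le_ciInf_ciSup_add_s16 {ι κ : Type*} [Nonempty ι] [Nonempty κ]
    {F G : ι → κ → ℝ} {m M c : ℝ} (hF : ∀ i j, m ≤ F i j) (hG : ∀ i j, G i j ≤ M)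
    (h : ∀ i j, F i j ≤ G i j + c) : ⨅ i, ⨆ j, F i j ≤ (⨅ i, ⨆ j, G i j) + c := by
  have hGbdd : ∀ i, BddAbove (range (G i)) := fun i => ⟨M, forall_mem_range.2 (hG i)⟩
  have hFbdd : ∀ i, BddAbove (range (F i)) :=
    fun i => ⟨M + c, forall_mem_range.2 fun j => by linarith [h i j, hG i j]⟩
  have hsup : ∀ i, ⨆ j, F i j ≤ (⨆ j, G i j) + c := fun i =>
    ciSup_le fun j => by linarith [h i j, le_ciSup (hGbdd i) j]
  have hinf : BddBelow (range fun i => ⨆ j, F i j) :=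
    ⟨m, forall_mem_range.2 fun i => (hF i (Classical.arbitrary κ)).trans (le_ciSup (hFbdd i) _)⟩
  rw [← sub_le_iff_le_add]
  exact le_ciInf fun i => sub_le_iff_le_add.2 ((ciInf_le hinf i).trans (hsup i))

section ShapleyOperator

variable {X E : Type*} [TopologicalSpace X]

structure IsCompactStepOn (A B : Set E) (T : E → E → X → X) (U : Set X) : Prop where
  mapsTo : ∀ a ∈ A, ∀ b ∈ B, ∀ x ∈ U, T a b x ∈ U
  isCompact_image : ∀ k ⊆ U, IsCompact k → IsCompact {z | ∃ a ∈ A, ∃ b ∈ B, ∃ x ∈ k, z = T a b x}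

variable {A B : Set E} {T : E → E → X → X} {U : Set X}

lemma IsCompactStepOn.exists_bounds (hT : IsCompactStepOn A B T U) {g : X → ℝ}
    (hg : BddOnCompacts U g) {k : Set X} (hk : k ⊆ U) (hkc : IsCompact k) :
    ∃ m M : ℝ, ∀ a ∈ A, ∀ b ∈ B, ∀ x ∈ k, m ≤ g (T a b x) ∧ g (T a b x) ≤ M := by
  have hsub : {z | ∃ a ∈ A, ∃ b ∈ B, ∃ x ∈ k, z = T a b x} ⊆ U := by
    rintro _ ⟨a, ha, b, hb, x, hx, rfl⟩
    exact hT.mapsTo a ha b hb x (hk hx)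
  obtain ⟨⟨m, hm⟩, ⟨M, hM⟩⟩ := hg _ hsub (hT.isCompact_image k hk hkc)
  refine ⟨m, M, fun a ha b hb x hx => ?_⟩
  have hmem := mem_image_of_mem g
    (show T a b x ∈ {z | ∃ a ∈ A, ∃ b ∈ B, ∃ x ∈ k, z = T a b x} from ⟨a, ha, b, hb, x, hx, rfl⟩)
  exact ⟨hm hmem, hM hmem⟩

variable [Nonempty A] [Nonempty B]

lemma shapley_le_shapley_add (hT : IsCompactStepOn A B T U) {g₁ g₂ : X → ℝ}
    (hg₁ : BddOnCompacts U g₁) (hg₂ : BddOnCompacts U g₂) {x y : X} (hx : x ∈ U) (hy : y ∈ U)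
    {c : ℝ} (h : ∀ a ∈ A, ∀ b ∈ B, g₁ (T a b x) ≤ g₂ (T a b y) + c) :
    shapley A B T g₁ x ≤ shapley A B T g₂ y + c := by
  obtain ⟨m, _, hm⟩ :=
    hT.exists_bounds hg₁ (singleton_subset_iff.2 hx) isCompact_singleton
  obtain ⟨_, M, hM⟩ :=
    hT.exists_bounds hg₂ (singleton_subset_iff.2 hy) isCompact_singleton
  exact ciInf_ciSup_le_ciInf_ciSup_add_s16 (fun a b => (hm a a.2 b b.2 x rfl).1)
    (fun a b => (hM a a.2 b b.2 y rfl).2) fun a b => h a a.2 b b.2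

lemma shapley_eq_shapley_add (hT : IsCompactStepOn A B T U) {g : X → ℝ}
    (hg : BddOnCompacts U g) {x y : X} (hx : x ∈ U) (hy : y ∈ U) {c : ℝ}
    (h : ∀ a ∈ A, ∀ b ∈ B, g (T a b x) = g (T a b y) + c) :
    shapley A B T g x = shapley A B T g y + c := by
  have h₁ := shapley_le_shapley_add hT hg hg hx hy fun a ha b hb => (h a ha b hb).le
  have h₂ := shapley_le_shapley_add hT hg hg hy hx (c := -c)
    fun a ha b hb => by linarith [h a ha b hb]
  linarith

lemma bddOnCompacts_shapley (hT : IsCompactStepOn A B T U) {g : X → ℝ}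
    (hg : BddOnCompacts U g) : BddOnCompacts U (shapley A B T g) := by
  intro k hk hkc
  obtain ⟨m, M, hmM⟩ := hT.exists_bounds hg hk hkc
  refine ⟨⟨m, forall_mem_image.2 fun x hx => ?_⟩, ⟨M, forall_mem_image.2 fun x hx => ?_⟩⟩
  · simpa [shapley] using ciInf_ciSup_le_ciInf_ciSup_add_s16 (F := fun (_ : A) (_ : B) => m)
      (G := fun (a : A) (b : B) => g (T a b x)) (c := 0) (fun _ _ => le_rfl)
      (fun a b => (hmM a a.2 b b.2 x hx).2) fun a b => by simpa using (hmM a a.2 b b.2 x hx).1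
  · simpa [shapley] using ciInf_ciSup_le_ciInf_ciSup_add_s16 (G := fun (_ : A) (_ : B) => M)
      (F := fun (a : A) (b : B) => g (T a b x)) (c := 0) (fun a b => (hmM a a.2 b b.2 x hx).1)
      (fun _ _ => le_rfl) fun a b => by simpa using (hmM a a.2 b b.2 x hx).2

lemma bddOnCompacts_iterate_shapley (hT : IsCompactStepOn A B T U) {g : X → ℝ}
    (hg : BddOnCompacts U g) (k : ℕ) : BddOnCompacts U ((shapley A B T)^[k] g) := by
  induction k with
  | zero => exact hg
  | succ k ih => rw [Function.iterate_succ_apply']; exact bddOnCompacts_shapley hT ih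

lemma lipOneOn_iterate_shapley (hT : IsCompactStepOn A B T U) {d : X → X → ℝ}
    (hTd : ∀ a ∈ A, ∀ b ∈ B, ∀ x ∈ U, ∀ y ∈ U, d (T a b x) (T a b y) ≤ d x y)
    {g : X → ℝ} (hg : LipOneOn d U g) (hgb : BddOnCompacts U g) (k : ℕ) :
    LipOneOn d U ((shapley A B T)^[k] g) := by
  induction k with
  | zero => exact hg
  | succ k ih =>
    intro x hx y hy
    have hgk := bddOnCompacts_iterate_shapley hT hgb k
    rw [Function.iterate_succ_apply']
    refine shapley_le_shapley_add hT hgk hgk hx hy fun a ha b hb => ?_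
    linarith [ih _ (hT.mapsTo a ha b hb x hx) _ (hT.mapsTo a ha b hb y hy),
      hTd a ha b hb x hx y hy]

lemma iterate_shapley_le (hT : IsCompactStepOn A B T U) {g W : X → ℝ}
    (hg : BddOnCompacts U g) (hW : BddOnCompacts U W) {l c : ℝ}
    (hSW : ∀ x ∈ U, shapley A B T W x ≤ l + W x) (hgW : ∀ x ∈ U, g x ≤ W x + c) (k : ℕ) :
    ∀ x ∈ U, (shapley A B T)^[k] g x ≤ k * l + W x + c := by
  induction k with
  | zero => simpa using hgW
  | succ k ih =>
    intro x hx
    rw [Function.iterate_succ_apply']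
    have := shapley_le_shapley_add hT (bddOnCompacts_iterate_shapley hT hg k) hW hx hx
      (c := k * l + c) fun a ha b hb => by linarith [ih _ (hT.mapsTo a ha b hb x hx)]
    push_cast
    linarith [hSW x hx]

lemma le_iterate_shapley (hT : IsCompactStepOn A B T U) {V : Set X} (hVU : V ⊆ U)
    (hTV : ∀ a ∈ A, ∀ b ∈ B, ∀ x ∈ V, T a b x ∈ V) {g W : X → ℝ}
    (hg : BddOnCompacts U g) (hW : BddOnCompacts U W) {l c : ℝ}
    (hSW : ∀ x ∈ V, l + W x ≤ shapley A B T W x) (hgW : ∀ x ∈ V, W x + c ≤ g x) (k : ℕ) :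
    ∀ x ∈ V, k * l + W x + c ≤ (shapley A B T)^[k] g x := by
  induction k with
  | zero => simpa using hgW
  | succ k ih =>
    intro x hx
    rw [Function.iterate_succ_apply']
    have := shapley_le_shapley_add hT hW (bddOnCompacts_iterate_shapley hT hg k) (hVU hx)
      (hVU hx) (c := -(k * l + c)) fun a ha b hb => by linarith [ih _ (hTV a ha b hb x hx)]
    push_cast
    linarith [hSW x hx]

theorem mem_Icc_of_tendsto_iterate_shapley_div (hT : IsCompactStepOn A B T U)
    {V : Set X} (hVU : V ⊆ U) (hTV : ∀ a ∈ A, ∀ b ∈ B, ∀ x ∈ V, T a b x ∈ V) {d : X → X → ℝ}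
    (hTd : ∀ a ∈ A, ∀ b ∈ B, ∀ x ∈ U, ∀ y ∈ U, d (T a b x) (T a b y) ≤ d x y)
    {g W : X → ℝ} (hg : BddOnCompacts U g) (hgd : LipOneOn d U g) (hW : BddOnCompacts U W)
    {μ l : ℝ} (hSW_le : ∀ x ∈ U, shapley A B T W x ≤ l + W x)
    (hle_SW : ∀ x ∈ V, μ + W x ≤ shapley A B T W x)
    (hgW : ∃ c, ∀ x ∈ U, g x ≤ W x + c) (hWg : ∃ c, ∀ x ∈ U, W x + c ≤ g x)
    {x₀ x : X} (hx₀ : x₀ ∈ V) (hx : x ∈ U) {ρ : ℝ}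
    (hρ : Tendsto (fun k : ℕ => (shapley A B T)^[k] g x / k) atTop (nhds ρ)) :
    ρ ∈ Icc μ l := by
  obtain ⟨c₁, hc₁⟩ := hgW
  obtain ⟨c₂, hc₂⟩ := hWg
  refine ⟨le_of_tendsto_div_of_forall_le hρ (c := W x₀ + c₂ - d x₀ x) fun k => ?_,
    le_of_tendsto_div_of_forall_ge hρ (c := W x + c₁) fun k => ?_⟩
  · linarith [le_iterate_shapley hT hVU hTV hg hW hle_SW (fun y hy => hc₂ y (hVU hy)) k x₀ hx₀,
      lipOneOn_iterate_shapley hT hTd hgd hg k x₀ (hVU hx₀) x hx]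
  · linarith [iterate_shapley_le hT hg hW hSW_le hc₁ k x hx]

end ShapleyOperator

lemma eventually_pos_add_smul_mem {V : Type*} [NormedAddCommGroup V] [NormedSpace ℝ V]
    {s : Set V} {p : V} (hs : s ∈ nhds p) (x : V) :
    ∀ᶠ t in nhdsWithin (0 : ℝ) (Ioi 0), 0 < t ∧ p + t • x ∈ s := by
  have hlim : Tendsto (fun t : ℝ => p + t • x) (nhdsWithin 0 (Ioi 0)) (nhds p) :=
    ((continuous_const.add (continuous_id.smul continuous_const)).tendsto' 0 p
      (by simp)).mono_left nhdsWithin_le_nhds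
  exact eventually_mem_nhdsWithin.and (hlim.eventually_mem hs)

section Cone

open Pointwise

variable {n : ℕ}

def funkSet (C : Set (Fin n → ℝ)) (x y : Fin n → ℝ) : Set ℝ := {l | 0 < l ∧ l • y - x ∈ C}

lemma funk_eq_log_sInf (C : Set (Fin n → ℝ)) (x y : Fin n → ℝ) :
    funk C x y = Real.log (sInf (funkSet C x y)) := rfl

lemma funkSet_bddBelow (C : Set (Fin n → ℝ)) (x y : Fin n → ℝ) : BddBelow (funkSet C x y) :=
  ⟨0, fun _ hl => hl.1.le⟩

variable {C : Set (Fin n → ℝ)} {e : Fin n → ℝ}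

lemma add_mem_of_convex_of_smul_mem (hconv : Convex ℝ C)
    (hC : ∀ x ∈ C, ∀ r : ℝ, 0 ≤ r → r • x ∈ C) {u w : Fin n → ℝ} (hu : u ∈ C) (hw : w ∈ C) :
    u + w ∈ C := by
  have := hC _ (hconv hu hw (by norm_num : (0 : ℝ) ≤ 1 / 2) (by norm_num : (0 : ℝ) ≤ 1 / 2)
    (by norm_num)) 2 (by norm_num)
  rwa [smul_add, smul_smul, smul_smul, show (2 : ℝ) * (1 / 2) = 1 by norm_num, one_smul,
    one_smul] at this

lemma dotProduct_pos_of_mem_interior [Nontrivial (Fin n → ℝ)]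
    (hpointed : ∀ x ∈ C, -x ∈ C → x = 0) (he : e ∈ interior (dualCone C)) {z : Fin n → ℝ}
    (hz : z ∈ interior C) : 0 < z ⬝ᵥ e := by
  have hz0 : z ≠ 0 := by
    rintro rfl
    obtain ⟨x, hx⟩ := exists_ne (0 : Fin n → ℝ)
    have hz := mem_interior_iff_mem_nhds.1 hz
    obtain ⟨t, ⟨ht, hxt⟩, -, hxt'⟩ :=
      ((eventually_pos_add_smul_mem hz x).and (eventually_pos_add_smul_mem hz (-x))).exists
    rw [zero_add] at hxt hxt'
    exact hx ((smul_eq_zero.1 (hpointed _ hxt (by rwa [← smul_neg]))).resolve_left ht.ne')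
  obtain ⟨t, ht, hte⟩ :=
    (eventually_pos_add_smul_mem (mem_interior_iff_mem_nhds.1 he) (-z)).exists
  have hzz : 0 < z ⬝ᵥ z := (Finset.sum_nonneg fun i _ => mul_self_nonneg (z i)).lt_of_ne
    (Ne.symm (dotProduct_self_eq_zero.not.2 hz0))
  have := hte z (interior_subset hz)
  rw [dotProduct_add, dotProduct_smul, dotProduct_neg, smul_eq_mul] at this
  nlinarith

lemma mem_funkSet_of_ball_subset (hC : ∀ x ∈ C, ∀ r : ℝ, 0 ≤ r → r • x ∈ C)
    {x y : Fin n → ℝ} {ε l : ℝ} (hball : Metric.ball y ε ⊆ C) (hl : 0 < l)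
    (hxl : ‖x‖ < l * ε) : l ∈ funkSet C x y := by
  have hmem : y - l⁻¹ • x ∈ Metric.ball y ε := by
    rw [Metric.mem_ball, dist_eq_norm, sub_sub_cancel_left, norm_neg, norm_smul, norm_inv,
      Real.norm_of_nonneg hl.le, inv_mul_lt_iff₀ hl]
    exact hxl
  have := hC _ (hball hmem) l hl.le
  rw [smul_sub, smul_inv_smul₀ hl.ne'] at this
  exact ⟨hl, this⟩

lemma funkSet_nonempty (hC : ∀ x ∈ C, ∀ r : ℝ, 0 ≤ r → r • x ∈ C) {y : Fin n → ℝ}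
    (hy : y ∈ interior C) (x : Fin n → ℝ) : (funkSet C x y).Nonempty := by
  obtain ⟨ε, hε, hball⟩ := Metric.mem_nhds_iff.1 (mem_interior_iff_mem_nhds.1 hy)
  refine ⟨‖x‖ / ε + 1, mem_funkSet_of_ball_subset hC hball (by positivity) ?_⟩
  rw [add_mul, div_mul_cancel₀ _ hε.ne']
  linarith

lemma div_le_of_mem_funkSet (he : e ∈ dualCone C) {x y : Fin n → ℝ} (hy : 0 < y ⬝ᵥ e)
    {l : ℝ} (hl : l ∈ funkSet C x y) : x ⬝ᵥ e / y ⬝ᵥ e ≤ l := by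
  have := he _ hl.2
  rw [sub_dotProduct, smul_dotProduct, smul_eq_mul] at this
  rw [div_le_iff₀ hy]
  linarith

lemma div_le_sInf_funkSet (hC : ∀ x ∈ C, ∀ r : ℝ, 0 ≤ r → r • x ∈ C) (he : e ∈ dualCone C)
    {x y : Fin n → ℝ} (hy : y ∈ interior C) (hye : 0 < y ⬝ᵥ e) :
    x ⬝ᵥ e / y ⬝ᵥ e ≤ sInf (funkSet C x y) :=
  le_csInf (funkSet_nonempty hC hy x) fun _ hl => div_le_of_mem_funkSet he hye hl

lemma sInf_funkSet_pos (hC : ∀ x ∈ C, ∀ r : ℝ, 0 ≤ r → r • x ∈ C) (he : e ∈ dualCone C)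
    {x y : Fin n → ℝ} (hx : 0 < x ⬝ᵥ e) (hy : y ∈ interior C) (hye : 0 < y ⬝ᵥ e) :
    0 < sInf (funkSet C x y) :=
  (div_pos hx hye).trans_le (div_le_sInf_funkSet hC he hy hye)

lemma log_div_le_funk (hC : ∀ x ∈ C, ∀ r : ℝ, 0 ≤ r → r • x ∈ C) (he : e ∈ dualCone C)
    {x y : Fin n → ℝ} (hx : 0 < x ⬝ᵥ e) (hy : y ∈ interior C) (hye : 0 < y ⬝ᵥ e) :
    Real.log (x ⬝ᵥ e / y ⬝ᵥ e) ≤ funk C x y :=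
  Real.log_le_log (div_pos hx hye) (div_le_sInf_funkSet hC he hy hye)

lemma funk_le_log_norm_div_add_one (hC : ∀ x ∈ C, ∀ r : ℝ, 0 ≤ r → r • x ∈ C)
    (he : e ∈ dualCone C) {x y : Fin n → ℝ} (hx : 0 < x ⬝ᵥ e) (hye : 0 < y ⬝ᵥ e) {ε : ℝ}
    (hε : 0 < ε) (hball : Metric.ball y ε ⊆ C) : funk C x y ≤ Real.log (‖x‖ / ε + 1) := by
  have hy : y ∈ interior C :=
    mem_interior.2 ⟨_, hball, Metric.isOpen_ball, Metric.mem_ball_self hε⟩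
  refine Real.log_le_log (sInf_funkSet_pos hC he hx hy hye) (csInf_le (funkSet_bddBelow C x y)
    (mem_funkSet_of_ball_subset hC hball (by positivity) ?_))
  rw [add_mul, div_mul_cancel₀ _ hε.ne']
  linarith

lemma funk_triangle (hC : ∀ x ∈ C, ∀ r : ℝ, 0 ≤ r → r • x ∈ C)
    (hCadd : ∀ u ∈ C, ∀ w ∈ C, u + w ∈ C) (he : e ∈ dualCone C) {x y z : Fin n → ℝ}
    (hx : 0 < x ⬝ᵥ e) (hy : y ∈ interior C) (hye : 0 < y ⬝ᵥ e) (hz : z ∈ interior C)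
    (hze : 0 < z ⬝ᵥ e) : funk C x z ≤ funk C x y + funk C y z := by
  have hmul : ∀ l ∈ funkSet C x y, ∀ l' ∈ funkSet C y z, sInf (funkSet C x z) ≤ l * l' := by
    rintro l ⟨hl, hlC⟩ l' ⟨hl', hlC'⟩
    refine csInf_le (funkSet_bddBelow C x z) ⟨mul_pos hl hl', ?_⟩
    have : (l * l') • z - x = l • (l' • z - y) + (l • y - x) := by
      rw [smul_sub, smul_smul]; abel
    exact this ▸ hCadd _ (hC _ hlC' l hl.le) _ hlC
  have hxy := sInf_funkSet_pos hC he hx hy hye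
  have hyz := sInf_funkSet_pos hC he hye hz hze
  -- take the infimum over `l` and then over `l'` in `sInf S_xz ≤ l * l'`
  have hle : sInf (funkSet C x z) ≤ sInf (funkSet C x y) * sInf (funkSet C y z) := by
    rw [← div_le_iff₀' hxy]
    refine le_csInf (funkSet_nonempty hC hz y) fun l' hl' => ?_
    rw [div_le_iff₀' hxy, ← div_le_iff₀ hl'.1]
    exact le_csInf (funkSet_nonempty hC hy x) fun l hl => by
      rw [div_le_iff₀ hl'.1]; exact hmul l hl l' hl'
  rw [funk_eq_log_sInf, funk_eq_log_sInf, funk_eq_log_sInf, ← Real.log_mul hxy.ne' hyz.ne']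
  exact Real.log_le_log (sInf_funkSet_pos hC he hx hz hze) hle

lemma funk_smul_left (hC : ∀ x ∈ C, ∀ r : ℝ, 0 ≤ r → r • x ∈ C) (he : e ∈ dualCone C)
    {x y : Fin n → ℝ} (hx : 0 < x ⬝ᵥ e) (hy : y ∈ interior C) (hye : 0 < y ⬝ᵥ e) {c : ℝ}
    (hc : 0 < c) : funk C (c • x) y = Real.log c + funk C x y := by
  have hset : funkSet C (c • x) y = c • funkSet C x y := by
    ext l
    rw [mem_smul_set_iff_inv_smul_mem₀ hc.ne', smul_eq_mul]
    have : (c⁻¹ * l) • y - x = c⁻¹ • (l • y - c • x) := by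
      rw [smul_sub, mul_smul, inv_smul_smul₀ hc.ne']
    show (0 < l ∧ _) ↔ (0 < c⁻¹ * l ∧ (c⁻¹ * l) • y - x ∈ C)
    rw [this]
    refine and_congr (by simp [hc]) ⟨fun h => hC _ h _ (by positivity), fun h => ?_⟩
    simpa [smul_smul, hc.ne'] using hC _ h c hc.le
  rw [funk_eq_log_sInf, funk_eq_log_sInf, hset, Real.sInf_smul_of_nonneg hc.le, smul_eq_mul,
    Real.log_mul hc.ne' (sInf_funkSet_pos hC he hx hy hye).ne']

end Cone

lemma Ih_le {n : ℕ} (C : Set (Fin n → ℝ)) {Xh : Finset (Fin n → ℝ)} (hne : Xh.Nonempty)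
    (v : (Fin n → ℝ) → ℝ) (x : Fin n → ℝ) {y : Fin n → ℝ} (hy : y ∈ Xh) :
    Ih C Xh hne v x ≤ v y + funk C x y :=
  Finset.inf'_le (fun y => v y + funk C x y) hy

section Interpolation

variable {n : ℕ} {C : Set (Fin n → ℝ)} {e : Fin n → ℝ}

lemma lipOneOn_funk_left (hC : ∀ x ∈ C, ∀ r : ℝ, 0 ≤ r → r • x ∈ C)
    (hCadd : ∀ u ∈ C, ∀ w ∈ C, u + w ∈ C) (he : e ∈ dualCone C)
    (hpos : ∀ z ∈ interior C, 0 < z ⬝ᵥ e) {y : Fin n → ℝ} (hy : y ∈ interior C) :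
    LipOneOn (funk C) (interior C) (funk C · y) := fun x hx x' hx' => by
  linarith [funk_triangle hC hCadd he (hpos x hx) hx' (hpos x' hx') hy (hpos y hy)]

lemma bddOnCompacts_funk_left (hC : ∀ x ∈ C, ∀ r : ℝ, 0 ≤ r → r • x ∈ C)
    (he : e ∈ dualCone C) (hpos : ∀ z ∈ interior C, 0 < z ⬝ᵥ e) {y : Fin n → ℝ}
    (hy : y ∈ interior C) : BddOnCompacts (interior C) (funk C · y) := by
  obtain ⟨ε, hε, hball⟩ := Metric.mem_nhds_iff.1 (mem_interior_iff_mem_nhds.1 hy)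
  refine BddOnCompacts.of_le_of_le (lo := fun x => Real.log (x ⬝ᵥ e / y ⬝ᵥ e))
    (hi := fun x => Real.log (‖x‖ / ε + 1)) ?_ ?_ fun x hx =>
      ⟨log_div_le_funk hC he (hpos x hx) hy (hpos y hy),
        funk_le_log_norm_div_add_one hC he (hpos x hx) (hpos y hy) hε hball⟩
  · exact ContinuousOn.log (by fun_prop) fun x hx => (div_pos (hpos x hx) (hpos y hy)).ne'
  · exact (Continuous.log (by fun_prop) fun x => by positivity).continuousOn

variable {Xh : Finset (Fin n → ℝ)} {v : (Fin n → ℝ) → ℝ}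

lemma lipOneOn_Ih (hne : Xh.Nonempty) (hC : ∀ x ∈ C, ∀ r : ℝ, 0 ≤ r → r • x ∈ C)
    (hCadd : ∀ u ∈ C, ∀ w ∈ C, u + w ∈ C) (he : e ∈ dualCone C)
    (hpos : ∀ z ∈ interior C, 0 < z ⬝ᵥ e) (hXh : ↑Xh ⊆ interior C) :
    LipOneOn (funk C) (interior C) (Ih C Xh hne v) :=
  LipOneOn.finset_inf' hne fun y hy x hx x' hx' => by
    linarith [lipOneOn_funk_left hC hCadd he hpos (hXh hy) x hx x' hx']

lemma bddOnCompacts_Ih (hne : Xh.Nonempty) (hC : ∀ x ∈ C, ∀ r : ℝ, 0 ≤ r → r • x ∈ C)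
    (he : e ∈ dualCone C) (hpos : ∀ z ∈ interior C, 0 < z ⬝ᵥ e) (hXh : ↑Xh ⊆ interior C) :
    BddOnCompacts (interior C) (Ih C Xh hne v) :=
  BddOnCompacts.finset_inf' hne fun y hy =>
    (bddOnCompacts_funk_left hC he hpos (hXh hy)).const_add (v y)

lemma Ih_smul (hne : Xh.Nonempty) (hC : ∀ x ∈ C, ∀ r : ℝ, 0 ≤ r → r • x ∈ C)
    (he : e ∈ dualCone C) (hpos : ∀ z ∈ interior C, 0 < z ⬝ᵥ e) (hXh : ↑Xh ⊆ interior C)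
    {x : Fin n → ℝ} (hx : 0 < x ⬝ᵥ e) {c : ℝ} (hc : 0 < c) :
    Ih C Xh hne v (c • x) = Real.log c + Ih C Xh hne v x := by
  rw [Ih, Ih, Finset.apply_inf'_eq_inf'_comp hne (Real.log c + ·)
    fun a b => (min_add_add_left _ _ _).symm]
  refine Finset.inf'_congr hne rfl fun y hy => ?_
  rw [Function.comp_apply, funk_smul_left hC he hx (hXh hy) (hpos y (hXh hy)) hc]
  ring

lemma le_Ih_add_of_lipOneOn (hne : Xh.Nonempty) {U : Set (Fin n → ℝ)}
    {g : (Fin n → ℝ) → ℝ} (hg : LipOneOn (funk C) U g) (hXh : ↑Xh ⊆ U) {c : ℝ}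
    (hgv : ∀ y ∈ Xh, g y ≤ v y + c) {x : Fin n → ℝ} (hx : x ∈ U) :
    g x ≤ Ih C Xh hne v x + c := by
  obtain ⟨y, hy, hxy⟩ := Xh.exists_mem_eq_inf' hne (fun y => v y + funk C x y)
  rw [Ih, hxy]
  linarith [hg x hx y (hXh hy), hgv y hy]

lemma exists_funk_le_Ih_add (hne : Xh.Nonempty) (hC : ∀ x ∈ C, ∀ r : ℝ, 0 ≤ r → r • x ∈ C)
    (hCadd : ∀ u ∈ C, ∀ w ∈ C, u + w ∈ C) (he : e ∈ dualCone C)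
    (hpos : ∀ z ∈ interior C, 0 < z ⬝ᵥ e) (hXh : ↑Xh ⊆ interior C) {x₀ : Fin n → ℝ}
    (hx₀ : x₀ ∈ interior C) : ∃ c, ∀ x ∈ interior C, funk C x x₀ ≤ Ih C Xh hne v x + c :=
  ⟨Xh.sup' hne fun y => funk C y x₀ - v y, fun _ hx =>
    le_Ih_add_of_lipOneOn hne (lipOneOn_funk_left hC hCadd he hpos hx₀) hXh
      (fun y hy => by linarith [Finset.le_sup' (fun y => funk C y x₀ - v y) hy]) hx⟩

lemma exists_Ih_add_le_funk (hne : Xh.Nonempty) (hC : ∀ x ∈ C, ∀ r : ℝ, 0 ≤ r → r • x ∈ C)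
    (hCadd : ∀ u ∈ C, ∀ w ∈ C, u + w ∈ C) (he : e ∈ dualCone C)
    (hpos : ∀ z ∈ interior C, 0 < z ⬝ᵥ e) (hXh : ↑Xh ⊆ interior C) {x₀ : Fin n → ℝ}
    (hx₀ : x₀ ∈ interior C) : ∃ c, ∀ x ∈ interior C, Ih C Xh hne v x + c ≤ funk C x x₀ := by
  obtain ⟨y, hy⟩ := hne
  refine ⟨-(v y + funk C x₀ y), fun x hx => ?_⟩
  linarith [Ih_le C ⟨y, hy⟩ v x hy,
    funk_triangle hC hCadd he (hpos x hx) hx₀ (hpos x₀ hx₀) (hXh hy) (hpos y (hXh hy))]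

lemma add_sub_le_of_lipOneOn (hne : Xh.Nonempty) {U : Set (Fin n → ℝ)}
    {φ : (Fin n → ℝ) → ℝ} (hφ : LipOneOn (funk C) U φ) {l h : ℝ} {x y : Fin n → ℝ}
    (hx : x ∈ U) (hy : y ∈ Xh) (hyU : y ∈ U) (hφy : φ y = l + v y)
    (hxy : funk C x y + funk C y x < h) :
    l - h + Ih C Xh hne v x ≤ φ x := by
  linarith [hφ y hyU x hx, Ih_le C hne v x hy]

end Interpolation

lemma shapley_eq_Fop_of_log_homogeneous {n : ℕ} {e : Fin n → ℝ} {E : Type*} {A B : Set E}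
    {T : E → E → (Fin n → ℝ) → (Fin n → ℝ)} {g : (Fin n → ℝ) → ℝ}
    (hg : ∀ u, 0 < u ⬝ᵥ e → ∀ c : ℝ, 0 < c → g (c • u) = Real.log c + g u)
    {x : Fin n → ℝ} (hT : ∀ a ∈ A, ∀ b ∈ B, 0 < T a b x ⬝ᵥ e) :
    shapley A B T g x = Fop A B T e g x := by
  refine iInf_congr fun a => iSup_congr fun b => ?_
  have ht := hT a a.2 b b.2
  conv_lhs => rw [← smul_inv_smul₀ ht.ne' (T a b x)]
  refine hg _ ?_ _ ht
  rw [smul_dotProduct, smul_eq_mul, inv_mul_cancel₀ ht.ne']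
  exact one_pos

lemma exists_eq_smul_mem_crossSec {n : ℕ} {K : Set (Fin n → ℝ)} {e : Fin n → ℝ}
    (hK : ∀ x ∈ K, ∀ r : ℝ, 0 ≤ r → r • x ∈ K) {z : Fin n → ℝ} (hzK : z ∈ K)
    (hz : 0 < z ⬝ᵥ e) : ∃ t > (0 : ℝ), ∃ x ∈ crossSec K e, z = t • x := by
  refine ⟨_, hz, _, ⟨hK _ hzK _ (inv_nonneg.2 hz.le), ?_⟩, (smul_inv_smul₀ hz.ne' z).symm⟩
  rw [smul_dotProduct, smul_eq_mul, inv_mul_cancel₀ hz.ne']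

theorem stmt_16_general
    {n : ℕ} (C : Set (Fin n → ℝ))
    (hCconv : Convex ℝ C)
    (hCcone : ∀ x ∈ C, ∀ r : ℝ, 0 ≤ r → r • x ∈ C)
    (hCpointed : ∀ x ∈ C, -x ∈ C → x = 0)
    (estar : Fin n → ℝ) (hestar : estar ∈ interior (dualCone C))
    {E : Type*}
    (A B : Set E) (hAne : A.Nonempty)
    (hBne : B.Nonempty)
    (T : E → E → (Fin n → ℝ) → (Fin n → ℝ))
    (hTmaps : ∀ a ∈ A, ∀ b ∈ B, ∀ x ∈ interior C, T a b x ∈ interior C)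
    (hTnexp : ∀ a ∈ A, ∀ b ∈ B, ∀ x ∈ interior C, ∀ y ∈ interior C,
      funk C (T a b x) (T a b y) ≤ funk C x y)
    (hcomp : ∀ Kc : Set (Fin n → ℝ), Kc ⊆ interior C → IsCompact Kc →
      IsCompact {z | ∃ a ∈ A, ∃ b ∈ B, ∃ x ∈ Kc, z = T a b x})
    (K : Set (Fin n → ℝ)) (hKcone : ∀ x ∈ K, ∀ r : ℝ, 0 ≤ r → r • x ∈ K)
    (hTK : ∀ a ∈ A, ∀ b ∈ B, ∀ x ∈ K, T a b x ∈ K)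
    (hXsub : crossSec K estar ⊆ interior C)
    (hXne : (crossSec K estar).Nonempty)
    (hThom : ∀ a ∈ A, ∀ b ∈ B, ∀ x ∈ interior C, ∀ c : ℝ, 0 < c →
      T a b (c • x) = c • T a b x)
    (xb : Fin n → ℝ) (hxb : xb ∈ interior C) (ρ : ℝ)
    (hρ : Tendsto (fun k : ℕ =>
        (shapley A B T)^[k] (fun y => funk C y xb) xb / (k : ℝ))
      atTop (nhds ρ))
    (h : ℝ)
    (Xh : Finset (Fin n → ℝ)) (hXhne : Xh.Nonempty)
    (hXhsub : ↑Xh ⊆ crossSec K estar)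
    (hcover : ∀ x ∈ crossSec K estar, ∃ y ∈ Xh, funk C x y + funk C y x < h)
    (v : (Fin n → ℝ) → ℝ) (l : ℝ)
    (heig : ∀ x ∈ Xh, Fop A B T estar (Ih C Xh hXhne v) x = l + v x) :
    l - h ≤ ρ ∧ ρ ≤ l := by
  have := hAne.to_subtype
  have := hBne.to_subtype
  obtain ⟨x₀, hx₀⟩ := hXne
  have : Nontrivial (Fin n → ℝ) := nontrivial_of_ne x₀ 0 fun h => by simpa [h] using hx₀.2
  have he : estar ∈ dualCone C := interior_subset hestar
  have hCadd : ∀ u ∈ C, ∀ w ∈ C, u + w ∈ C := fun u hu w hw =>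
    add_mem_of_convex_of_smul_mem hCconv hCcone hu hw
  have hpos : ∀ z ∈ interior C, 0 < z ⬝ᵥ estar := fun z hz =>
    dotProduct_pos_of_mem_interior hCpointed hestar hz
  have hXh : (Xh : Set (Fin n → ℝ)) ⊆ interior C := hXhsub.trans hXsub
  have hT : IsCompactStepOn A B T (interior C) := ⟨hTmaps, hcomp⟩
  set W := Ih C Xh hXhne v
  have hWb : BddOnCompacts (interior C) W := bddOnCompacts_Ih hXhne hCcone he hpos hXh
  have hWsmul : ∀ x, 0 < x ⬝ᵥ estar → ∀ c : ℝ, 0 < c → W (c • x) = Real.log c + W x :=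
    fun x hx c hc => Ih_smul hXhne hCcone he hpos hXh hx hc
  have hSWlip : LipOneOn (funk C) (interior C) (shapley A B T W) :=
    lipOneOn_iterate_shapley hT hTnexp (lipOneOn_Ih hXhne hCcone hCadd he hpos hXh) hWb 1
  have hSW : ∀ y ∈ Xh, shapley A B T W y = l + v y := fun y hy => by
    rw [shapley_eq_Fop_of_log_homogeneous hWsmul
      fun a ha b hb => hpos _ (hTmaps a ha b hb y (hXh hy)), heig y hy]
  have hSW_le : ∀ x ∈ interior C, shapley A B T W x ≤ l + W x := fun x hx => by
    linarith [le_Ih_add_of_lipOneOn hXhne hSWlip hXh (c := l)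
      (fun y hy => by rw [hSW y hy, add_comm]) hx]
  -- on `K` it suffices to treat `X`, since both sides gain `log t` under `z ↦ t • z`
  have hle_SW : ∀ z ∈ K ∩ interior C, l - h + W z ≤ shapley A B T W z := by
    rintro z ⟨hzK, hz⟩
    obtain ⟨t, ht, x, hxX, rfl⟩ := exists_eq_smul_mem_crossSec hKcone hzK (hpos z hz)
    obtain ⟨y, hy, hxy⟩ := hcover x hxX
    have hx := hXsub hxX
    rw [shapley_eq_shapley_add hT hWb hz hx (c := Real.log t) fun a ha b hb => by
      rw [hThom a ha b hb x hx t ht, hWsmul _ (hpos _ (hTmaps a ha b hb x hx)) t ht, add_comm],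
      hWsmul x (hpos x hx) t ht]
    linarith [add_sub_le_of_lipOneOn hXhne hSWlip hx hy (hXh hy) (hSW y hy) hxy]
  exact mem_Icc_of_tendsto_iterate_shapley_div hT inter_subset_right
    (fun a ha b hb x hx => ⟨hTK a ha b hb x hx.1, hTmaps a ha b hb x hx.2⟩) hTnexp
    (bddOnCompacts_funk_left hCcone he hpos hxb) (lipOneOn_funk_left hCcone hCadd he hpos hxb)
    hWb hSW_le hle_SW (exists_funk_le_Ih_add hXhne hCcone hCadd he hpos hXh hxb)
    (exists_Ih_add_le_funk hXhne hCcone hCadd he hpos hXh hxb) ⟨hx₀.1, hXsub hx₀⟩ hxb hρ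

/-- an additive eigenpair `(v, λ)` of the discretized operator `F̂_h^+`
on a grid of mesh `h` yields the two-sided bound `λ - h ≤ ρ ≤ λ` on the competitive
spectral radius. -/
theorem stmt_16
    {n : ℕ} (C : Set (Fin n → ℝ))
    (hCclosed : IsClosed C) (hCconv : Convex ℝ C)
    (hCcone : ∀ x ∈ C, ∀ r : ℝ, 0 ≤ r → r • x ∈ C)
    (hCpointed : ∀ x ∈ C, -x ∈ C → x = 0)
    (estar : Fin n → ℝ) (hestar : estar ∈ interior (dualCone C))
    {E : Type*} [MetricSpace E]
    (A B : Set E) (hAc : IsCompact A) (hAne : A.Nonempty)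
    (hBc : IsCompact B) (hBne : B.Nonempty)
    (T : E → E → (Fin n → ℝ) → (Fin n → ℝ))
    (hTmaps : ∀ a ∈ A, ∀ b ∈ B, ∀ x ∈ interior C, T a b x ∈ interior C)
    (hTnexp : ∀ a ∈ A, ∀ b ∈ B, ∀ x ∈ interior C, ∀ y ∈ interior C,
      funk C (T a b x) (T a b y) ≤ funk C x y)
    (hconta : ∀ x ∈ interior C, ∀ b ∈ B, ContinuousOn (fun a => T a b x) A)
    (hcontb : ∀ x ∈ interior C, ∀ a ∈ A, ContinuousOn (fun b => T a b x) B)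
    (hcomp : ∀ Kc : Set (Fin n → ℝ), Kc ⊆ interior C → IsCompact Kc →
      IsCompact {z | ∃ a ∈ A, ∃ b ∈ B, ∃ x ∈ Kc, z = T a b x})
    (K : Set (Fin n → ℝ)) (hKclosed : IsClosed K)
    (hKcone : ∀ x ∈ K, ∀ r : ℝ, 0 ≤ r → r • x ∈ K) (hKC : K ⊆ C)
    (hTK : ∀ a ∈ A, ∀ b ∈ B, ∀ x ∈ K, T a b x ∈ K)
    (hXsub : crossSec K estar ⊆ interior C)
    (hXne : (crossSec K estar).Nonempty)
    (hThom : ∀ a ∈ A, ∀ b ∈ B, ∀ x ∈ interior C, ∀ c : ℝ, 0 < c →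
      T a b (c • x) = c • T a b x)
    (hTC : ∀ a ∈ A, ∀ b ∈ B, ∀ x ∈ C, T a b x ∈ C)
    (hText : ∀ a ∈ A, ∀ b ∈ B, ContinuousOn (T a b) C)
    (xb : Fin n → ℝ) (hxb : xb ∈ interior C) (ρ : ℝ)
    (hρ : Tendsto (fun k : ℕ =>
        (shapley A B T)^[k] (fun y => funk C y xb) xb / (k : ℝ))
      atTop (nhds ρ))
    (h : ℝ) (hh : 0 < h)
    (Xh : Finset (Fin n → ℝ)) (hXhne : Xh.Nonempty)
    (hXhsub : ↑Xh ⊆ crossSec K estar)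
    (hcover : ∀ x ∈ crossSec K estar, ∃ y ∈ Xh, funk C x y + funk C y x < h)
    (v : (Fin n → ℝ) → ℝ) (l : ℝ)
    (hvLip : ∀ x ∈ Xh, ∀ y ∈ Xh, v x - v y ≤ funk C x y)
    (heig : ∀ x ∈ Xh, Fop A B T estar (Ih C Xh hXhne v) x = l + v x) :
    l - h ≤ ρ ∧ ρ ≤ l :=
  stmt_16_general C hCconv hCcone hCpointed estar hestar A B hAne hBne T hTmaps hTnexp hcomp K
    hKcone hTK hXsub hXne hThom xb hxb ρ hρ h Xh hXhne hXhsub hcover v l heig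
end
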